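/- arXiv:2602.17430 — 3 statements merged into one kernel-verified Lean document; each statement's English description precedes it below -/
import Mathlib

section
/- Let A₁, …, A_m be positive semidefinite operators on a finite-dimensional complex Hilbert space H and let λ > 0. Then tr((∑ᵢ Aᵢ − λ·I)₊) ≥ ∑ᵢ tr((Aᵢ − λ·I)₊), where (X)₊ denotes the positive part of a self-adjoint operator X (the sum of its nonnegative eigenvalues times corresponding spectral projections). -/
open Matrix
open scoped ComplexOrder

/-- The trace of the positive part of a Hermitian matrix: the sum of its
nonnegative eigenvalues (junk value `0` for non-Hermitian input). -/
noncomputable def posPartTrace {n : ℕ} (A : Matrix (Fin n) (Fin n) ℂ) : ℝ :=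
  if h : A.IsHermitian then ∑ i, max (h.eigenvalues i) 0 else 0

/-!
Let `Pᵢ` be the spectral projection of `Xᵢ = Aᵢ - λI` onto its nonnegative eigenvalues, so that
`tr (Xᵢ)₊ = tr (Pᵢ Aᵢ) - λ tr Pᵢ`, and let `Q` be the support projection of `∑ Pᵢ`. Then
`Pᵢ ≤ Q`, hence `tr (Pᵢ Aᵢ) ≤ tr (Q Aᵢ)` as `Aᵢ ≥ 0`, while `tr Q = rank (∑ Pᵢ) ≤ ∑ tr Pᵢ`.
As `λ ≥ 0`, summing gives `∑ tr (Xᵢ)₊ ≤ tr (Q (∑ Aᵢ - λI))`, and `tr (Q X) ≤ tr X₊` whenever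
`0 ≤ Q ≤ I`.
-/

open scoped MatrixOrder

theorem isStarProjection_cfc {A : Type*} [Ring A] [StarRing A] [Algebra ℝ A] [TopologicalSpace A]
    [ContinuousFunctionalCalculus ℝ A IsSelfAdjoint] (f : ℝ → ℝ) (a : A)
    (hf : ∀ t ∈ spectrum ℝ a, f t * f t = f t)
    (hcont : ContinuousOn f (spectrum ℝ a) := by cfc_cont_tac) :
    IsStarProjection (cfc f a) where
  isSelfAdjoint := cfc_predicate f a
  isIdempotentElem := by
    rw [IsIdempotentElem, ← cfc_mul f f a]
    exact cfc_congr hf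

namespace Matrix

theorem rank_sum_le {m n K ι : Type*} [Fintype n] [Field K] (s : Finset ι)
    (A : ι → Matrix m n K) : (∑ i ∈ s, A i).rank ≤ ∑ i ∈ s, (A i).rank := by
  refine Finset.le_sum_of_subadditive rank (by simp) (fun A B ↦ ?_) s A
  rw [rank, mulVecLin_add]
  exact (Submodule.finrank_mono (LinearMap.range_add_le _ _)).trans
    (Submodule.finrank_add_le_finrank_add_finrank _ _)

variable {n : Type*} [Fintype n] [DecidableEq n]

theorem trace_eq_rank_of_isIdempotentElem {K : Type*} [Field K] {P : Matrix n n K}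
    (hP : IsIdempotentElem P) : P.trace = P.rank := by
  have h : IsIdempotentElem (toLin' P) := hP.map (toLinAlgEquiv' (R := K))
  rw [← trace_toLin'_eq, (LinearMap.IsIdempotentElem.isProj_range _ h).trace]
  rfl

theorem trace_mul_sub_smul_one {R : Type*} [CommRing R] (P A : Matrix n n R) (c : R) :
    (P * (A - c • 1)).trace = (P * A).trace - c * P.trace := by
  rw [Matrix.mul_sub, trace_sub, Matrix.mul_smul, Matrix.mul_one, trace_smul, smul_eq_mul]

variable {𝕜 : Type*} [RCLike 𝕜]

theorem IsStarProjection.le_of_le_of_mul_eq {P Q S : Matrix n n 𝕜} (hP : IsStarProjection P)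
    (hQ : IsStarProjection Q) (hPS : P ≤ S) (hSQ : S * Q = S) : P ≤ Q := by
  have hS : star (1 - Q) * S * (1 - Q) = 0 := by
    rw [mul_assoc, mul_sub, mul_one, hSQ, sub_self, mul_zero]
  have hP' : star (1 - Q) * P * (1 - Q) = 0 :=
    le_antisymm (hS ▸ star_left_conjugate_le_conjugate hPS _)
      (star_left_conjugate_nonneg hP.nonneg _)
  have hPQ : P * (1 - Q) = 0 := by
    rw [← conjTranspose_mul_self_eq_zero, ← star_eq_conjTranspose, star_mul,
      hP.isSelfAdjoint.star_eq, mul_assoc, ← mul_assoc P, hP.isIdempotentElem.eq, ← mul_assoc, hP']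
  rw [mul_sub, mul_one, sub_eq_zero] at hPQ
  exact hP.le_of_mul_eq_left hQ hPQ.symm

theorem PosSemidef.trace_mul_nonneg {A B : Matrix n n 𝕜} (hA : A.PosSemidef) (hB : B.PosSemidef) :
    0 ≤ (A * B).trace := by
  obtain ⟨C, rfl⟩ := CStarAlgebra.nonneg_iff_eq_star_mul_self.mp hB.nonneg
  rw [← mul_assoc, trace_mul_cycle, star_eq_conjTranspose]
  exact (hA.mul_mul_conjTranspose_same C).trace_nonneg

theorem trace_mul_le_trace_mul_of_le {P Q A : Matrix n n 𝕜} (hPQ : P ≤ Q) (hA : A.PosSemidef) :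
    (P * A).trace ≤ (Q * A).trace := by
  simpa [sub_mul, trace_sub] using (le_iff.mp hPQ).trace_mul_nonneg hA

theorem IsHermitian.trace_cfc {A : Matrix n n 𝕜} (hA : A.IsHermitian) (f : ℝ → ℝ) :
    (cfc f A).trace = ∑ i, (f (hA.eigenvalues i) : 𝕜) := by
  rw [hA.cfc_eq, IsHermitian.cfc, Unitary.conjStarAlgAut_apply, trace_mul_cycle,
    Unitary.coe_star_mul_self, one_mul, trace_diagonal]
  rfl

theorem IsHermitian.exists_isStarProjection_mul_eq_self_rank_le {S : Matrix n n 𝕜}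
    (hS : S.IsHermitian) :
    ∃ Q : Matrix n n 𝕜, IsStarProjection Q ∧ S * Q = S ∧ Q.rank ≤ S.rank := by
  have hcont (f : ℝ → ℝ) : ContinuousOn f (spectrum ℝ S) := finite_real_spectrum.continuousOn f
  -- As `0⁻¹ = 0`, `t * t⁻¹` is the indicator of `t ≠ 0`: `Q` is the support projection `S S⁺`.
  have hQ : cfc (fun t : ℝ ↦ t * t⁻¹) S = S * cfc (fun t : ℝ ↦ t⁻¹) S := by
    rw [cfc_mul _ _ S (hcont _) (hcont _), cfc_id' ℝ S]
  refine ⟨cfc (fun t : ℝ ↦ t * t⁻¹) S,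
    isStarProjection_cfc _ S (fun t _ ↦ ?_) (hcont _), ?_, ?_⟩
  · rcases eq_or_ne t 0 with rfl | ht <;> simp [*]
  · calc S * cfc (fun t : ℝ ↦ t * t⁻¹) S = cfc (fun t ↦ t * (t * t⁻¹)) S := by
          rw [cfc_mul (fun t ↦ t) (fun t ↦ t * t⁻¹) S (hcont _) (hcont _), cfc_id' ℝ S]
      _ = cfc (fun t ↦ t) S := cfc_congr fun t _ ↦ by
          rcases eq_or_ne t 0 with rfl | ht <;> simp [*]
      _ = S := cfc_id' ℝ S
  · rw [hQ]
    exact rank_mul_le_left _ _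

end Matrix

section posPartTrace

variable {n : ℕ}

theorem posPartTrace_eq_re_trace_posPart {X : Matrix (Fin n) (Fin n) ℂ} (hX : X.IsHermitian) :
    posPartTrace X = (X⁺).trace.re := by
  rw [posPartTrace, dif_pos hX, CFC.posPart_def, cfcₙ_eq_cfc, hX.trace_cfc, Complex.re_sum]
  rfl

theorem re_trace_mul_le_posPartTrace {X Q : Matrix (Fin n) (Fin n) ℂ} (hX : X.IsHermitian)
    (hQ₀ : 0 ≤ Q) (hQ₁ : Q ≤ 1) : (Q * X).trace.re ≤ posPartTrace X := by
  -- `tr X₊ - tr (Q X) = tr ((1 - Q) X₊) + tr (Q X₋)`, a sum of traces of products of PSD matrices.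
  have hpos := (Complex.nonneg_iff.mp ((le_iff.mp hQ₁).trace_mul_nonneg
    (nonneg_iff_posSemidef.mp (CFC.posPart_nonneg X)))).1
  have hneg := (Complex.nonneg_iff.mp ((nonneg_iff_posSemidef.mp hQ₀).trace_mul_nonneg
    (nonneg_iff_posSemidef.mp (CFC.negPart_nonneg X)))).1
  rw [posPartTrace_eq_re_trace_posPart hX]
  nth_rw 1 [← CFC.posPart_sub_negPart X hX.isSelfAdjoint]
  simp only [sub_mul, one_mul, mul_sub, trace_sub, Complex.sub_re] at hpos ⊢
  linarith

theorem Matrix.IsHermitian.exists_isStarProjection_re_trace_mul_eq_posPartTrace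
    {X : Matrix (Fin n) (Fin n) ℂ} (hX : X.IsHermitian) :
    ∃ P : Matrix (Fin n) (Fin n) ℂ, IsStarProjection P ∧ (P * X).trace.re = posPartTrace X := by
  have hcont (f : ℝ → ℝ) : ContinuousOn f (spectrum ℝ X) := finite_real_spectrum.continuousOn f
  refine ⟨cfc (fun t ↦ if 0 ≤ t then 1 else 0) X,
    isStarProjection_cfc _ X (fun t _ ↦ ?_) (hcont _), ?_⟩
  · split_ifs <;> simp
  · rw [posPartTrace_eq_re_trace_posPart hX, CFC.posPart_def, cfcₙ_eq_cfc]
    conv_lhs => enter [1, 1, 2]; rw [← cfc_id' ℝ X]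
    rw [← cfc_mul _ _ X (hcont _) (hcont _)]
    congr 2
    refine cfc_congr fun t _ ↦ ?_
    split_ifs with h
    · simp [h]
    · simp [posPart_eq_zero.mpr (not_le.mp h).le]

end posPartTrace

/-- For positive semidefinite `A₁, …, A_m` on a finite-dimensional Hilbert space and
`λ > 0`, one has `tr((∑ᵢ Aᵢ − λ·I)₊) ≥ ∑ᵢ tr((Aᵢ − λ·I)₊)`. -/
theorem posPartTrace_sum_sub_smul_one_ge {n m : ℕ}
    (A : Fin m → Matrix (Fin n) (Fin n) ℂ) (hA : ∀ i, (A i).PosSemidef)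
    (lam : ℝ) (hlam : 0 < lam) :
    ∑ i, posPartTrace (A i - (lam : ℂ) • (1 : Matrix (Fin n) (Fin n) ℂ)) ≤
      posPartTrace ((∑ i, A i) - (lam : ℂ) • (1 : Matrix (Fin n) (Fin n) ℂ)) := by
  have hshift {B : Matrix (Fin n) (Fin n) ℂ} (hB : B.IsHermitian) :
      (B - (lam : ℂ) • 1).IsHermitian :=
    hB.sub (isHermitian_one.smul (Complex.conj_ofReal lam))
  choose P hP hPX using fun i ↦
    (hshift (hA i).1).exists_isStarProjection_re_trace_mul_eq_posPartTrace
  obtain ⟨Q, hQ, hSQ, hQS⟩ := IsHermitian.exists_isStarProjection_mul_eq_self_rank_le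
    (isSelfAdjoint_sum Finset.univ fun i _ ↦ (hP i).isSelfAdjoint)
  have hPQ (i : Fin m) : P i ≤ Q := (hP i).le_of_le_of_mul_eq hQ
    (Finset.single_le_sum (fun j _ ↦ (hP j).nonneg) (Finset.mem_univ i)) hSQ
  have htrace : Q.trace.re ≤ ∑ i, (P i).trace.re := by
    simp only [trace_eq_rank_of_isIdempotentElem hQ.isIdempotentElem,
      trace_eq_rank_of_isIdempotentElem (hP _).isIdempotentElem, Complex.natCast_re]
    exact_mod_cast hQS.trans (rank_sum_le _ _)
  calc ∑ i, posPartTrace (A i - (lam : ℂ) • 1)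
      = ∑ i, (P i * A i).trace.re - lam * ∑ i, (P i).trace.re := by
        simp only [← hPX, trace_mul_sub_smul_one, Complex.sub_re, Complex.re_ofReal_mul,
          Finset.sum_sub_distrib, Finset.mul_sum]
    _ ≤ ∑ i, (Q * A i).trace.re - lam * Q.trace.re := by
        gcongr with i
        exact trace_mul_le_trace_mul_of_le (hPQ i) (hA i)
    _ = (Q * ((∑ i, A i) - (lam : ℂ) • 1)).trace.re := by
        simp only [trace_mul_sub_smul_one, Complex.sub_re, Complex.re_ofReal_mul, Finset.mul_sum,
          trace_sum, Complex.re_sum]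
    _ ≤ _ := re_trace_mul_le_posPartTrace (hshift (isSelfAdjoint_sum _ fun i _ ↦ (hA i).1))
        hQ.nonneg hQ.le_one
end

section
/- Let p, q ∈ [0,1] with p ≥ 9q. Then the binary relative entropy satisfies p·log₂(p/q) + (1−p)·log₂((1−p)/(1−q)) ≥ p. -/
/-- Binary relative entropy `D((p,1−p) ‖ (q,1−q))` in base 2, valued in `EReal`:
it is `+∞` when `q = 0` while `p > 0`, and otherwise equals
`p·log₂(p/q) + (1−p)·log₂((1−p)/(1−q))` (with `Real.logb 2 0 = 0`, giving the
convention `0·log₂(0/q) = 0`). -/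
noncomputable def binRelEnt (p q : ℝ) : EReal :=
  if q = 0 ∧ 0 < p then ⊤
  else ((p * Real.logb 2 (p / q) + (1 - p) * Real.logb 2 ((1 - p) / (1 - q)) : ℝ) : EReal)

/-!
Split the divergence as `p·ln(p/q) + (1−p)·ln((1−p)/(1−q))`. Since `p/q ≥ 9` the first term is at
least `p·ln 9`, and Gibbs' bound `a·ln(a/b) ≥ a − b` makes the second at least `q − p ≥ −p`. So the
divergence is at least `p·(ln 9 − 1) ≥ p·ln 2`, because `9/2 > e`.
-/

open Real

lemma sub_le_mul_log_div {a b : ℝ} (ha : 0 ≤ a) (hb : 0 < b) : a - b ≤ a * log (a / b) := by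
  rcases ha.eq_or_lt with rfl | ha
  · simpa using hb.le
  have hlog : 1 - b / a ≤ log (a / b) := by
    simpa only [inv_div] using one_sub_inv_le_log_of_pos (div_pos ha hb)
  calc a - b = a * (1 - b / a) := by field_simp
    _ ≤ a * log (a / b) := mul_le_mul_of_nonneg_left hlog ha.le

lemma one_add_log_two_le_log_nine : 1 + log 2 ≤ log 9 := by
  have h : 1 ≤ log (9 / 2) := by
    rw [le_log_iff_exp_le (by norm_num)]
    linarith [exp_one_lt_d9]
  rw [log_div (by norm_num) (by norm_num)] at h
  linarith

lemma mul_log_two_le_of_nine_mul_le {p q : ℝ} (hq : 0 < q) (hp : p ≤ 1) (h : 9 * q ≤ p) :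
    p * log 2 ≤ p * log (p / q) + (1 - p) * log ((1 - p) / (1 - q)) := by
  have hp0 : 0 ≤ p := by linarith
  have hfirst : p * log 9 ≤ p * log (p / q) :=
    mul_le_mul_of_nonneg_left (log_le_log (by norm_num) ((le_div_iff₀ hq).2 (by linarith))) hp0
  have hsecond : (1 - p) - (1 - q) ≤ (1 - p) * log ((1 - p) / (1 - q)) :=
    sub_le_mul_log_div (by linarith) (by linarith)
  have hnine : p * (1 + log 2) ≤ p * log 9 :=
    mul_le_mul_of_nonneg_left one_add_log_two_le_log_nine hp0
  linarith

/-- For `p, q ∈ [0,1]` with `p ≥ 9q`, the binary relative entropy satisfies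
`p·log₂(p/q) + (1−p)·log₂((1−p)/(1−q)) ≥ p`. -/
theorem binRelEnt_ge_of_ge_nine_mul
    (p q : ℝ) (hp : p ∈ Set.Icc (0 : ℝ) 1) (hq : q ∈ Set.Icc (0 : ℝ) 1)
    (h : 9 * q ≤ p) :
    (p : EReal) ≤ binRelEnt p q := by
  obtain ⟨hp0, hp1⟩ := hp
  rcases hq.1.eq_or_lt with rfl | hq0
  · rcases hp0.eq_or_lt with rfl | hp0
    · simp [binRelEnt]
    · simp [binRelEnt, hp0]
  rw [binRelEnt, if_neg fun hq => hq0.ne' hq.1, EReal.coe_le_coe_iff]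
  simp only [logb, ← mul_div_assoc, ← add_div]
  rw [le_div_iff₀ (log_pos one_lt_two)]
  exact mul_log_two_le_of_nine_mul_le hq0 hp1 h
end

section
/- (Pinching inequality) Let A be a self-adjoint operator on a finite-dimensional complex Hilbert space with spectral projections P₁, …, P_r onto its distinct eigenvalues, and let E_A(X) = ∑ᵢ Pᵢ X Pᵢ be the associated pinching map. Then for every positive semidefinite operator σ, σ ≤ r · E_A(σ) in the Loewner order. -/
/-!
The identity `2 (r ∑ᵢ Pᵢ σ Pᵢ - σ) = ∑ᵢ ∑ⱼ (Pᵢ - Pⱼ) σ (Pᵢ - Pⱼ)` holds for any family `Pᵢ`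
summing to `1`, because the cross terms add up to `(∑ᵢ Pᵢ) σ (∑ⱼ Pⱼ) = σ`. When the `Pᵢ` are
Hermitian, every summand on the right is a congruence `B σ Bᴴ` of `σ`, hence positive semidefinite.
-/

open Matrix
open scoped ComplexOrder

variable {ι R : Type*}

theorem Finset.sum_sum_mul_mul_of_sum_eq_one [Semiring R] (s : Finset ι) {P : ι → R}
    (hP : ∑ i ∈ s, P i = 1) (X : R) : ∑ i ∈ s, ∑ j ∈ s, P i * X * P j = X := by
  simp_rw [← Finset.mul_sum, hP, mul_one, ← Finset.sum_mul, hP, one_mul]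

theorem Finset.sum_sum_sub_mul_mul_sub [Ring R] (s : Finset ι) {P : ι → R}
    (hP : ∑ i ∈ s, P i = 1) (X : R) :
    ∑ i ∈ s, ∑ j ∈ s, (P i - P j) * X * (P i - P j)
      = 2 • (s.card • ∑ i ∈ s, P i * X * P i - X) := by
  have expand : ∀ i j, (P i - P j) * X * (P i - P j)
      = P i * X * P i + P j * X * P j - (P i * X * P j + P j * X * P i) := fun i j => by
    noncomm_ring
  have cross := s.sum_sum_mul_mul_of_sum_eq_one hP X
  simp only [expand, Finset.sum_sub_distrib, Finset.sum_add_distrib, Finset.sum_const,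
    ← Finset.smul_sum, cross]
  rw [Finset.sum_comm, cross]
  abel

variable {m 𝕜 : Type*} [RCLike 𝕜]

theorem Matrix.PosSemidef.of_nsmul {A : Matrix m m 𝕜} {k : ℕ} (hk : k ≠ 0)
    (h : (k • A).PosSemidef) : A.PosSemidef := by
  have hA : A = (k⁻¹ : ℝ) • (k • A) := by
    rw [← Nat.cast_smul_eq_nsmul ℝ, smul_smul, inv_mul_cancel₀ (by exact_mod_cast hk), one_smul]
  rw [hA]
  exact h.smul (by positivity)

theorem Matrix.PosSemidef.card_nsmul_sum_mul_mul_sub [Fintype m] [DecidableEq m] [Fintype ι]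
    {P : ι → Matrix m m 𝕜} (hP : ∀ i, (P i)ᴴ = P i) (hsum : ∑ i, P i = 1)
    {σ : Matrix m m 𝕜} (hσ : σ.PosSemidef) :
    (Fintype.card ι • ∑ i, P i * σ * P i - σ).PosSemidef := by
  refine .of_nsmul two_ne_zero ?_
  rw [← Finset.card_univ, ← Finset.sum_sum_sub_mul_mul_sub _ hsum]
  refine posSemidef_sum _ fun i _ => posSemidef_sum _ fun j _ => ?_
  simpa only [conjTranspose_sub, hP] using hσ.mul_mul_conjTranspose_same (P i - P j)

theorem pinching_inequality_general {n r : ℕ}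
    (P : Fin r → Matrix (Fin n) (Fin n) ℂ)
    (hherm : ∀ i, (P i)ᴴ = P i)
    (hsum : ∑ i, P i = 1)
    (σ : Matrix (Fin n) (Fin n) ℂ) (hσ : σ.PosSemidef) :
    ((r : ℂ) • (∑ i, P i * σ * P i) - σ).PosSemidef := by
  simpa only [Nat.cast_smul_eq_nsmul, Fintype.card_fin] using
    hσ.card_nsmul_sum_mul_mul_sub hherm hsum

/-- **Pinching inequality.** Let `A` be a self-adjoint operator with `r` distinct
eigenvalues `μ₁, …, μ_r` and corresponding mutually orthogonal spectral projections
`P₁, …, P_r` summing to the identity, and let `E_A(X) = ∑ᵢ Pᵢ X Pᵢ` be the pinching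
map. Then for every positive semidefinite `σ`, `σ ≤ r · E_A(σ)` in the Loewner
order, i.e. `r · ∑ᵢ Pᵢ σ Pᵢ − σ` is positive semidefinite. -/
theorem pinching_inequality {n r : ℕ}
    (A : Matrix (Fin n) (Fin n) ℂ) (hA : A.IsHermitian)
    (μ : Fin r → ℝ) (hμ : Function.Injective μ)
    (P : Fin r → Matrix (Fin n) (Fin n) ℂ)
    (hproj : ∀ i, (P i) * (P i) = P i)
    (hherm : ∀ i, (P i)ᴴ = P i)
    (horth : ∀ i j, i ≠ j → (P i) * (P j) = 0)
    (hsum : ∑ i, P i = 1)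
    (hspec : A = ∑ i, (μ i : ℂ) • P i)
    (σ : Matrix (Fin n) (Fin n) ℂ) (hσ : σ.PosSemidef) :
    ((r : ℂ) • (∑ i, P i * σ * P i) - σ).PosSemidef :=
  pinching_inequality_general P hherm hsum σ hσ
end
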